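/- Global Lipschitz bound for the square root of length: for c ∈ R^{d×n}_* and h ∈ (ℝ^d)^n, |d(√ℓ(c))·h| ≤ √(Σ_{i=1}^n |h_{i+1}-h_i|²/|e_i|). -/

import Mathlib

open scoped BigOperators
open Finset

noncomputable section

variable {d n : ℕ}

/-- The `i`-th edge of a discrete closed curve. -/
def edge (c : ZMod n → EuclideanSpace ℝ (Fin d)) (i : ZMod n) : EuclideanSpace ℝ (Fin d) :=
  c (i + 1) - c i

/-- The averaged vertex weight `μ_i = (|e_i| + |e_{i-1}|)/2`. -/
def mu (c : ZMod n → EuclideanSpace ℝ (Fin d)) (i : ZMod n) : ℝ :=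
  (‖edge c i‖ + ‖edge c (i - 1)‖) / 2

/-- The total length `ℓ(c) = Σ_i |e_i|`. -/
def len [NeZero n] (c : ZMod n → EuclideanSpace ℝ (Fin d)) : ℝ :=
  ∑ i : ZMod n, ‖edge c i‖

/-- Discrete arc-length derivative `D_s^m h`. -/
def Ds (c : ZMod n → EuclideanSpace ℝ (Fin d)) :
    ℕ → (ZMod n → EuclideanSpace ℝ (Fin d)) → ZMod n → EuclideanSpace ℝ (Fin d)
  | 0, h => h
  | (j + 1), h => fun i =>
      if Even j then (‖edge c i‖)⁻¹ • (Ds c j h (i + 1) - Ds c j h i)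
      else (mu c i)⁻¹ • (Ds c j h i - Ds c j h (i - 1))

/-- The weight `μ_{i,m}`: `μ_i` for even `m`, `|e_i|` for odd `m`. -/
def muM (c : ZMod n → EuclideanSpace ℝ (Fin d)) (m : ℕ) (i : ZMod n) : ℝ :=
  if Even m then mu c i else ‖edge c i‖

/-- The homogeneous discrete Sobolev energy `ġ^m_c(h,k)`. -/
def gdot [NeZero n] (c : ZMod n → EuclideanSpace ℝ (Fin d)) (m : ℕ)
    (h k : ZMod n → EuclideanSpace ℝ (Fin d)) : ℝ :=
  ∑ i : ZMod n, (len c) ^ (2 * (m : ℤ) - 3) *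
    (inner ℝ (Ds c m h i) (Ds c m k i) : ℝ) * muM c m i

/-- The discrete Sobolev metric `g^m_c(h,k) = ġ^0_c(h,k) + ġ^m_c(h,k)`. -/
def gm [NeZero n] (c : ZMod n → EuclideanSpace ℝ (Fin d)) (m : ℕ)
    (h k : ZMod n → EuclideanSpace ℝ (Fin d)) : ℝ :=
  gdot c 0 h k + gdot c m h k

end

/-! The derivative of `√ℓ` in direction `h` is `(2√ℓ)⁻¹ Σ ⟪e_i, h_{i+1} - h_i⟫ / |e_i|`. Bounding each
term by `|h_{i+1} - h_i| = (|h_{i+1} - h_i| / √|e_i|) · √|e_i|` and applying Cauchy–Schwarz gives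
`√(Σ |h_{i+1} - h_i|² / |e_i|) · √ℓ`, and the factor `√ℓ` cancels. -/

open RealInnerProductSpace

theorem HasDerivAt.norm_of_ne_zero {F : Type*} [NormedAddCommGroup F] [InnerProductSpace ℝ F]
    {f : ℝ → F} {f' : F} {x : ℝ} (hf : HasDerivAt f f' x) (h0 : f x ≠ 0) :
    HasDerivAt (fun t => ‖f t‖) (⟪f x, f'⟫ / ‖f x‖) x := by
  have hsq := hf.norm_sq.sqrt (pow_ne_zero 2 (norm_ne_zero_iff.mpr h0))
  simp only [Real.sqrt_sq (norm_nonneg _)] at hsq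
  convert hsq using 1
  field_simp

theorem abs_sum_inner_div_norm_le {ι E : Type*} [NormedAddCommGroup E] [InnerProductSpace ℝ E]
    (s : Finset ι) {e : ι → E} (w : ι → E) (he : ∀ i ∈ s, e i ≠ 0) :
    |∑ i ∈ s, ⟪e i, w i⟫ / ‖e i‖| ≤
      √(∑ i ∈ s, ‖w i‖ ^ 2 / ‖e i‖) * √(∑ i ∈ s, ‖e i‖) := by
  have hpos : ∀ i ∈ s, 0 < ‖e i‖ := fun i hi => norm_pos_iff.mpr (he i hi)
  have hterm : |∑ i ∈ s, ⟪e i, w i⟫ / ‖e i‖| ≤ ∑ i ∈ s, ‖w i‖ := by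
    refine (abs_sum_le_sum_abs _ _).trans (sum_le_sum fun i hi => ?_)
    rw [abs_div, abs_norm, div_le_iff₀ (hpos i hi), mul_comm]
    exact abs_real_inner_le_norm _ _
  have hcs : (∑ i ∈ s, ‖w i‖) ^ 2 ≤ (∑ i ∈ s, ‖w i‖ ^ 2 / ‖e i‖) * ∑ i ∈ s, ‖e i‖ :=
    sum_sq_le_sum_mul_sum_of_sq_le_mul s (fun i hi => div_nonneg (sq_nonneg _) (hpos i hi).le)
      (fun i _ => norm_nonneg _) fun i hi => (div_mul_cancel₀ _ (hpos i hi).ne').ge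
  calc |∑ i ∈ s, ⟪e i, w i⟫ / ‖e i‖| ≤ ∑ i ∈ s, ‖w i‖ := hterm
    _ ≤ √((∑ i ∈ s, ‖w i‖ ^ 2 / ‖e i‖) * ∑ i ∈ s, ‖e i‖) := Real.le_sqrt_of_sq_le hcs
    _ = _ := Real.sqrt_mul (sum_nonneg fun i hi => div_nonneg (sq_nonneg _) (hpos i hi).le) _

section DiscreteCurve

variable {d n : ℕ}

theorem edge_add_smul (c h : ZMod n → EuclideanSpace ℝ (Fin d)) (t : ℝ) (i : ZMod n) :
    edge (fun j => c j + t • h j) i = edge c i + t • edge h i := by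
  simp only [edge, smul_sub]
  abel

variable [NeZero n] {c : ZMod n → EuclideanSpace ℝ (Fin d)}

theorem len_pos (hc : ∀ i, edge c i ≠ 0) : 0 < len c :=
  sum_pos (fun i _ => norm_pos_iff.mpr (hc i)) univ_nonempty

theorem hasDerivAt_sqrt_len_add_smul (hc : ∀ i, edge c i ≠ 0)
    (h : ZMod n → EuclideanSpace ℝ (Fin d)) :
    HasDerivAt (fun t : ℝ => √(len (fun i => c i + t • h i)))
      ((∑ i, ⟪edge c i, edge h i⟫ / ‖edge c i‖) / (2 * √(len c))) 0 := by
  have hedge : ∀ i, HasDerivAt (fun t : ℝ => ‖edge c i + t • edge h i‖)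
      (⟪edge c i, edge h i⟫ / ‖edge c i‖) 0 := fun i => by
    have hline := ((hasDerivAt_id (0 : ℝ)).smul_const (edge h i)).const_add (edge c i)
    simpa using hline.norm_of_ne_zero (by simpa using hc i)
  have hlen := HasDerivAt.fun_sum fun i (_ : i ∈ univ) => hedge i
  simp only [← edge_add_smul] at hlen
  simpa [len] using hlen.sqrt (by simpa [len] using (len_pos hc).ne')

end DiscreteCurve

theorem stmt_19_general (d n : ℕ) [NeZero n]
    (c h : ZMod n → EuclideanSpace ℝ (Fin d))
    (hc : ∀ i : ZMod n, c i ≠ c (i + 1)) :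
    |deriv (fun t : ℝ => Real.sqrt (len (fun i => c i + t • h i))) 0| ≤
      Real.sqrt (∑ i : ZMod n, ‖h (i + 1) - h i‖ ^ 2 / ‖edge c i‖) := by
  have he : ∀ i, edge c i ≠ 0 := fun i => sub_ne_zero.mpr (hc i).symm
  have hL : 0 < √(len c) := Real.sqrt_pos.mpr (len_pos he)
  have hCS := abs_sum_inner_div_norm_le univ (edge h) fun i _ => he i
  rw [(hasDerivAt_sqrt_len_add_smul he h).deriv, abs_div,
    abs_of_pos (by positivity : 0 < 2 * √(len c)), div_le_iff₀ (by positivity)]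
  calc _ ≤ √(∑ i, ‖edge h i‖ ^ 2 / ‖edge c i‖) * √(len c) := hCS
    _ ≤ _ := mul_le_mul_of_nonneg_left (by linarith) (Real.sqrt_nonneg _)

/-- Global Lipschitz bound for the square root of the length. -/
theorem stmt_19 (d n : ℕ) [NeZero n] (hn : 3 ≤ n)
    (c h : ZMod n → EuclideanSpace ℝ (Fin d))
    (hc : ∀ i : ZMod n, c i ≠ c (i + 1)) :
    |deriv (fun t : ℝ => Real.sqrt (len (fun i => c i + t • h i))) 0| ≤
      Real.sqrt (∑ i : ZMod n, ‖h (i + 1) - h i‖ ^ 2 / ‖edge c i‖) :=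
  stmt_19_general d n c h hc
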